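/- arXiv:1709.00732 — 6 statements merged into one kernel-verified Lean document; each statement's English description precedes it below -/
import Mathlib

section
/- Let Δ ∈ ℤ[X] be a polynomial with nonzero constant coefficient that is self-reciprocal (its coefficient sequence is palindromic, i.e., Δ.reverse = Δ) and satisfies Δ(1) = 1 or Δ(1) = -1. If α ∈ ℂ with |α| = 1 is a root of Δ (i.e., the evaluation of Δ at α under the algebra map ℤ[X] → ℂ is zero), then there exists a polynomial δ ∈ ℤ[X] such that: δ is irreducible in ℤ[X], δ divides Δ, δ has nonzero constant coefficient, δ is self-reciprocal (δ.reverse = δ), δ(1) = 1 or δ(1) = -1, and α is a root of δ. -/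
/-!
Some irreducible factor `δ` of `Δ` vanishes at `α`. Since `ᾱ = α⁻¹` is also a root of `δ`,
`α` is a root of `δ.reverse`; by Gauss's lemma `δ` is then, up to a scalar, the minimal
polynomial of `α` over `ℚ`, so `δ` divides `δ.reverse`, and the two are associated, i.e.
`δ.reverse = ±δ`. Both `δ(0)` and `δ(1)` divide the corresponding values of `Δ`, so they are
nonzero and `δ(1) = ±1`; as the reversal does not change the value at `1`, the sign is `+`.
-/

open Polynomial

theorem UniqueFactorizationMonoid.exists_irreducible_dvd_map_eq_zero
    {α M F : Type*} [CommMonoidWithZero α] [UniqueFactorizationMonoid α]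
    [CommMonoidWithZero M] [NoZeroDivisors M] [Nontrivial M]
    [FunLike F α M] [MonoidWithZeroHomClass F α M] (f : F) {a : α} (ha : a ≠ 0) (hfa : f a = 0) :
    ∃ p, Irreducible p ∧ p ∣ a ∧ f p = 0 := by
  obtain ⟨u, hu⟩ := factors_prod ha
  have hprod : (Multiset.map f (factors a)).prod = 0 := by
    have := congrArg f hu
    rw [map_mul, hfa] at this
    rw [← map_multiset_prod]
    exact (mul_eq_zero.mp this).resolve_right (u.isUnit.map f).ne_zero
  obtain ⟨p, hp, hfp⟩ := Multiset.mem_map.mp (Multiset.prod_eq_zero_iff.mp hprod)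
  exact ⟨p, irreducible_of_factor p hp, dvd_of_mem_factors hp, hfp⟩

namespace Polynomial

theorem reverse_reverse_of_coeff_zero_ne_zero {R : Type*} [Semiring R] {p : R[X]}
    (h : p.coeff 0 ≠ 0) : p.reverse.reverse = p := by
  have hnd : p.reverse.natDegree = p.natDegree := by
    rw [reverse_natDegree, natTrailingDegree_eq_zero.2 (Or.inr h), Nat.sub_zero]
  ext n
  rw [coeff_reverse, coeff_reverse, hnd, revAt_invol]

theorem eval_one_reverse {R : Type*} [CommSemiring R] (p : R[X]) :
    p.reverse.eval 1 = p.eval 1 := by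
  let : Invertible (1 : R) := invertibleOne
  simpa using eval₂_reverse_mul_pow (RingHom.id R) 1 p

theorem associated_reverse_of_dvd_reverse {R : Type*} [CommRing R] [IsDomain R]
    {p : R[X]} (h0 : p.coeff 0 ≠ 0) (h : p ∣ p.reverse) : Associated p p.reverse := by
  obtain ⟨q, hq⟩ := h
  refine associated_of_dvd_dvd ⟨q, hq⟩ ⟨q.reverse, ?_⟩
  rw [← reverse_mul_of_domain, ← hq, reverse_reverse_of_coeff_zero_ne_zero h0]

theorem reverse_eq_self_of_associated {p : ℤ[X]} (h : Associated p p.reverse)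
    (h1 : p.eval 1 ≠ 0) : p.reverse = p := by
  obtain ⟨u, hu⟩ := h
  obtain ⟨c, hc, hcu⟩ := Polynomial.isUnit_iff.mp u.isUnit
  rcases Int.isUnit_iff.mp hc with rfl | rfl
  · rw [← hu, ← hcu, map_one, mul_one]
  · have hneg : p.reverse = -p := by rw [← hu, ← hcu, map_neg, map_one, mul_neg_one]
    have := eval_one_reverse p
    rw [hneg, eval_neg] at this
    exact absurd (by linarith) h1

theorem aeval_reverse_eq_zero_of_norm_eq_one {p : ℤ[X]} {z : ℂ} (hz : ‖z‖ = 1)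
    (h : aeval z p = 0) : aeval z p.reverse = 0 := by
  have hconj : starRingEnd ℂ z * z = 1 := by
    rw [mul_comm, Complex.mul_conj, Complex.normSq_eq_norm_sq, hz, one_pow, Complex.ofReal_one]
  let : Invertible (starRingEnd ℂ z) := ⟨z, by rwa [mul_comm], hconj⟩
  have hconj_root : aeval (starRingEnd ℂ z) p = 0 := by
    rw [← RingHom.toIntAlgHom_apply, aeval_algHom_apply, h, map_zero]
  have hinv : ⅟(starRingEnd ℂ z) = z := rfl
  rw [aeval_def, ← hinv, eval₂_reverse_eq_zero_iff, ← aeval_def, hconj_root]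

theorem _root_.Irreducible.dvd_of_aeval_eq_zero {K : Type*} [Field K] [CharZero K]
    {δ p : ℤ[X]} {z : K} (hδ : Irreducible δ) (hδz : aeval z δ = 0) (hpz : aeval z p = 0) :
    δ ∣ p := by
  have hdeg : δ.natDegree ≠ 0 :=
    (natDegree_pos_of_aeval_root hδ.ne_zero hδz fun x hx => by simpa using hx).ne'
  have hprim := hδ.isPrimitive hdeg
  have hδℚ : Irreducible (δ.map (algebraMap ℤ ℚ)) :=
    hprim.irreducible_iff_irreducible_map_fraction_map.mp hδ
  apply hprim.dvd_of_fraction_map_dvd_fraction_map (K := ℚ)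
  rw [← hδℚ.dvd_iff_aeval_eq_zero (b := z) (by rwa [aeval_map_algebraMap]),
    aeval_map_algebraMap, hpz]

end Polynomial

theorem irreducible_alexander_factor_of_unit_circle_root_general
    (Δ : Polynomial ℤ) (h0 : Δ.coeff 0 ≠ 0)
    (h1 : Δ.eval 1 = 1 ∨ Δ.eval 1 = -1)
    (α : ℂ) (hα : ‖α‖ = 1) (hroot : Polynomial.aeval α Δ = 0) :
    ∃ δ : Polynomial ℤ, Irreducible δ ∧ δ ∣ Δ ∧ δ.coeff 0 ≠ 0 ∧ δ.reverse = δ ∧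
      (δ.eval 1 = 1 ∨ δ.eval 1 = -1) ∧ Polynomial.aeval α δ = 0 := by
  have hΔ : Δ ≠ 0 := by rintro rfl; simp at h0
  obtain ⟨δ, hirr, hdvd, hδα⟩ :=
    UniqueFactorizationMonoid.exists_irreducible_dvd_map_eq_zero (aeval α) hΔ hroot
  have hδ0 : δ.coeff 0 ≠ 0 := fun h =>
    h0 (zero_dvd_iff.mp (h ▸ map_dvd constantCoeff hdvd))
  have hδ1 : IsUnit (δ.eval 1) :=
    isUnit_of_dvd_unit (map_dvd (evalRingHom 1) hdvd) (Int.isUnit_iff.mpr h1)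
  have hassoc : Associated δ δ.reverse := associated_reverse_of_dvd_reverse hδ0 <|
    hirr.dvd_of_aeval_eq_zero hδα (aeval_reverse_eq_zero_of_norm_eq_one hα hδα)
  exact ⟨δ, hirr, hdvd, hδ0, reverse_eq_self_of_associated hassoc hδ1.ne_zero,
    Int.isUnit_iff.mp hδ1, hδα⟩

/-- Every root on the unit circle of an Alexander polynomial is also a root of an
irreducible Alexander polynomial. -/
theorem irreducible_alexander_factor_of_unit_circle_root
    (Δ : Polynomial ℤ) (h0 : Δ.coeff 0 ≠ 0) (hsym : Δ.reverse = Δ)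
    (h1 : Δ.eval 1 = 1 ∨ Δ.eval 1 = -1)
    (α : ℂ) (hα : ‖α‖ = 1) (hroot : Polynomial.aeval α Δ = 0) :
    ∃ δ : Polynomial ℤ, Irreducible δ ∧ δ ∣ Δ ∧ δ.coeff 0 ≠ 0 ∧ δ.reverse = δ ∧
      (δ.eval 1 = 1 ∨ δ.eval 1 = -1) ∧ Polynomial.aeval α δ = 0 :=
  irreducible_alexander_factor_of_unit_circle_root_general Δ h0 h1 α hα hroot
end

section
/- The set of complex numbers β with |β| = 1 for which there exists a polynomial p ∈ ℤ[X] of degree 4 with nonzero constant coefficient, self-reciprocal (p.reverse = p), satisfying p(1) = 1 or p(1) = -1, having β as a root, and such that the set {z ∈ ℂ : |z| = 1 and p(z) = 0} has exactly two elements, is dense in the unit circle {z ∈ ℂ : |z| = 1}. -/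
/-!
For `z` on the unit circle, `z⁻² p(z)` of a palindromic quartic `p` is a quadratic `q` in
`z + z⁻¹ = 2 re z ∈ [-2, 2]`. Taking `q(w) = (2 - w)(n(2 + w) - a) + 1` gives `p(1) = q(2) = 1`,
and for `n ≥ 0` the quadratic `q` has at most one root in `(-∞, 2]`, never `±2`, so the roots of
`p` on the circle form a single pair `β, β̄`. A root `w < 2` of `q` solves
`n(2 + w) + 1/(2 - w) = a`; the left side increases by at least `n(w₂ - w₁)` on `[w₁, w₂]`, so for
large `n` it meets an integer there. Hence these roots are dense in `[-2, 2]`, and their lifts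
`β` are dense in the circle.
-/

open Polynomial Set ComplexConjugate

/-- `X² q(X + X⁻¹)` for `q(w) = (2 - w)(n(2 + w) - a) + 1`; `circleQuadratic n a x = q(2x)`. -/
noncomputable def alexanderQuartic (n a : ℤ) : ℤ[X] :=
  C (-n) * X ^ 4 + C a * X ^ 3 + C (2 * n - 2 * a + 1) * X ^ 2 + C a * X + C (-n)

def circleQuadratic (n a : ℤ) (x : ℝ) : ℝ := 2 * (1 - x) * (2 * n * (1 + x) - a) + 1

theorem alexanderQuartic_natDegree {n : ℤ} (hn : n ≠ 0) (a : ℤ) :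
    (alexanderQuartic n a).natDegree = 4 := by
  unfold alexanderQuartic
  compute_degree!

theorem alexanderQuartic_coeff_zero (n a : ℤ) : (alexanderQuartic n a).coeff 0 = -n := by
  simp [alexanderQuartic]

theorem alexanderQuartic_eval_one (n a : ℤ) : (alexanderQuartic n a).eval 1 = 1 := by
  simp [alexanderQuartic]
  ring

theorem alexanderQuartic_reverse {n : ℤ} (hn : n ≠ 0) (a : ℤ) :
    (alexanderQuartic n a).reverse = alexanderQuartic n a := by
  ext i
  rw [coeff_reverse, alexanderQuartic_natDegree hn]
  rcases le_or_gt i 4 with hi | hi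
  · interval_cases i <;>
      simp only [alexanderQuartic, coeff_add, coeff_C_mul, coeff_X_pow, coeff_X, coeff_C] <;>
      norm_num [revAt_le]
  · rw [revAt_eq_self_of_lt hi]

theorem aeval_alexanderQuartic_of_norm_eq_one (n a : ℤ) {z : ℂ} (hz : ‖z‖ = 1) :
    aeval z (alexanderQuartic n a) = z ^ 2 * circleQuadratic n a z.re := by
  have hz0 : z ≠ 0 := norm_ne_zero_iff.1 (by rw [hz]; exact one_ne_zero)
  have htrace : z + z⁻¹ = 2 * z.re := by
    rw [Complex.inv_eq_conj hz, Complex.add_conj]; push_cast; ring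
  have : aeval z (alexanderQuartic n a) =
      z ^ 2 * ((2 - (z + z⁻¹)) * (n * (2 + (z + z⁻¹)) - a) + 1) := by
    simp [alexanderQuartic, map_ofNat]
    field_simp
    ring
  rw [this, htrace, circleQuadratic]
  push_cast
  ring

theorem aeval_alexanderQuartic_eq_zero_iff (n a : ℤ) {z : ℂ} (hz : ‖z‖ = 1) :
    aeval z (alexanderQuartic n a) = 0 ↔ circleQuadratic n a z.re = 0 := by
  have hz0 : z ≠ 0 := norm_ne_zero_iff.1 (by rw [hz]; exact one_ne_zero)
  rw [aeval_alexanderQuartic_of_norm_eq_one n a hz]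
  simp [hz0]

theorem circleQuadratic_one (n a : ℤ) : circleQuadratic n a 1 = 1 := by
  simp [circleQuadratic]

theorem circleQuadratic_neg_one_ne_zero (n a : ℤ) : circleQuadratic n a (-1) ≠ 0 := by
  have : circleQuadratic n a (-1) = ((1 - 4 * a : ℤ) : ℝ) := by
    simp only [circleQuadratic]; push_cast; ring
  rw [this, Int.cast_ne_zero]
  omega

theorem eq_of_circleQuadratic_eq_zero {n : ℤ} (hn : 0 ≤ n) (a : ℤ) {u v : ℝ} (hu : u ≤ 1)
    (hv : v ≤ 1) (hqu : circleQuadratic n a u = 0) (hqv : circleQuadratic n a v = 0) :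
    u = v := by
  unfold circleQuadratic at hqu hqv
  have hn' : (0 : ℝ) ≤ n := by exact_mod_cast hn
  have hfactor : (u - v) * (a - 2 * n * (u + v)) = 0 := by linear_combination (hqu - hqv) / 2
  rcases mul_eq_zero.1 hfactor with h | ha
  · linarith
  · -- with `a = 2n(u + v)` the quadratic at `u` is `4n(1 - u)(1 - v) + 1 > 0`
    have := mul_nonneg (mul_nonneg hn' (sub_nonneg.2 hu)) (sub_nonneg.2 hv)
    nlinarith

theorem exists_circleQuadratic_eq_zero {x y : ℝ} (hxy : x < y) (hy : y < 1) :
    ∃ n a : ℤ, 0 < n ∧ ∃ z ∈ Icc x y, circleQuadratic n a z = 0 := by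
  obtain ⟨n, hn⟩ := exists_nat_gt (1 / (2 * (y - x)))
  have hn0 : (0 : ℝ) < n := (by positivity : (0 : ℝ) < 1 / (2 * (y - x))).trans hn
  set f : ℝ → ℝ := fun z => 2 * n * (1 + z) + 1 / (2 * (1 - z)) with hf
  have hfq : ∀ a : ℤ, ∀ z < 1, circleQuadratic n a z = 2 * (1 - z) * (f z - a) := by
    intro a z hz
    have : 1 - z ≠ 0 := by linarith
    simp only [circleQuadratic, hf]
    field_simp
    push_cast
    ring
  have hf_incr : f x + 1 ≤ f y := by
    have h1 : 1 ≤ 2 * n * (y - x) := by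
      rw [div_lt_iff₀ (by linarith)] at hn; linarith
    have h2 : 1 / (2 * (1 - x)) ≤ 1 / (2 * (1 - y)) :=
      one_div_le_one_div_of_le (by linarith) (by linarith)
    simp only [hf]; linarith
  set a := ⌈f x⌉
  have hqx : circleQuadratic n a x ≤ 0 := by
    rw [hfq a x (hxy.trans hy)]
    exact mul_nonpos_of_nonneg_of_nonpos (by linarith) (sub_nonpos.2 (Int.le_ceil _))
  have hqy : 0 ≤ circleQuadratic n a y := by
    rw [hfq a y hy]
    have := Int.ceil_lt_add_one (f x)
    exact mul_nonneg (by linarith) (by linarith)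
  have hcont : Continuous (circleQuadratic n a) := by unfold circleQuadratic; fun_prop
  obtain ⟨z, hz, hqz⟩ := intermediate_value_Icc hxy.le hcont.continuousOn ⟨hqx, hqy⟩
  exact ⟨n, a, by exact_mod_cast hn0, z, hz, hqz⟩

theorem eq_or_eq_conj_of_norm_eq_of_re_eq {z w : ℂ} (hnorm : ‖z‖ = ‖w‖) (hre : z.re = w.re) :
    z = w ∨ z = conj w := by
  have hsq : z.im ^ 2 = w.im ^ 2 := by
    have := congrArg (· ^ 2) hnorm
    simp only [Complex.sq_norm, Complex.normSq_apply, hre] at this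
    linarith
  rcases sq_eq_sq_iff_eq_or_eq_neg.1 hsq with him | him
  · exact Or.inl (Complex.ext hre him)
  · exact Or.inr (Complex.ext hre (by simpa using him))

theorem encard_unitCircle_roots_alexanderQuartic {n : ℤ} (hn : 0 ≤ n) (a : ℤ) {β : ℂ}
    (hβ : ‖β‖ = 1) (hroot : aeval β (alexanderQuartic n a) = 0) :
    {z : ℂ | ‖z‖ = 1 ∧ aeval z (alexanderQuartic n a) = 0}.encard = 2 := by
  have hq := (aeval_alexanderQuartic_eq_zero_iff n a hβ).1 hroot
  have him : β.im ≠ 0 := by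
    intro him
    have hre : β.re = 1 ∨ β.re = -1 := by
      have := Complex.sq_norm β
      rw [hβ, Complex.normSq_apply, him] at this
      exact sq_eq_one_iff.1 (by linarith)
    rcases hre with hre | hre <;> rw [hre] at hq
    · exact one_ne_zero ((circleQuadratic_one n a).symm.trans hq)
    · exact circleQuadratic_neg_one_ne_zero n a hq
  have hroots : {z : ℂ | ‖z‖ = 1 ∧ aeval z (alexanderQuartic n a) = 0} = {β, conj β} := by
    ext z
    simp only [mem_ofPred_eq, mem_insert_iff, mem_singleton_iff]
    constructor
    · rintro ⟨hz, hzroot⟩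
      refine eq_or_eq_conj_of_norm_eq_of_re_eq (hz.trans hβ.symm) ?_
      refine eq_of_circleQuadratic_eq_zero hn a (hz ▸ z.re_le_norm) (hβ ▸ β.re_le_norm) ?_ hq
      exact (aeval_alexanderQuartic_eq_zero_iff n a hz).1 hzroot
    · rintro (rfl | rfl)
      · exact ⟨hβ, hroot⟩
      · have hz : ‖conj β‖ = 1 := (Complex.norm_conj β).trans hβ
        refine ⟨hz, (aeval_alexanderQuartic_eq_zero_iff n a hz).2 ?_⟩
        rwa [Complex.conj_re]
  rw [hroots]
  exact encard_pair fun h => him (Complex.conj_eq_iff_im.1 h.symm)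

theorem Icc_subset_closure_inter_of_exists_mem_Icc {s : Set ℝ} {a b : ℝ} (hab : a < b)
    (h : ∀ x y, x < y → y < b → ∃ z ∈ s, z ∈ Icc x y) : Icc a b ⊆ closure (s ∩ Icc a b) := by
  intro x ⟨hax, hxb⟩
  rw [Metric.mem_closure_iff]
  intro ε hε
  set l := max a (x - ε / 2)
  set r := min b (x + ε / 2)
  have hlr : l < r := max_lt (lt_min hab (by linarith)) (lt_min (by linarith) (by linarith))
  have hal := le_max_left a (x - ε / 2)
  have hxl := le_max_right a (x - ε / 2)
  have hrb := min_le_left b (x + ε / 2)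
  have hrx := min_le_right b (x + ε / 2)
  obtain ⟨z, hzs, hlz, hzr⟩ := h l ((l + r) / 2) (by linarith) (by linarith)
  refine ⟨z, ⟨hzs, by linarith, by linarith⟩, ?_⟩
  rw [Real.dist_eq, abs_lt]
  constructor <;> linarith

theorem mem_closure_unitCircle_of_re_mem_closure {s : Set ℝ} {ω : ℂ} (hω : ‖ω‖ = 1)
    (hre : ω.re ∈ closure (s ∩ Icc (-1) 1)) : ω ∈ closure {z : ℂ | ‖z‖ = 1 ∧ z.re ∈ s} := by
  set σ : ℝ := if 0 ≤ ω.im then 1 else -1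
  have hσ : σ ^ 2 = 1 := by unfold σ; split_ifs <;> norm_num
  set ψ : ℝ → ℂ := fun x => x + (σ * √(1 - x ^ 2) : ℝ) * Complex.I
  have hψ : Continuous ψ := by fun_prop
  have hψω : ψ ω.re = ω := by
    have him : √(1 - ω.re ^ 2) = |ω.im| := by
      rw [← Real.sqrt_sq_eq_abs]
      congr 1
      have := Complex.sq_norm ω
      rw [hω, Complex.normSq_apply] at this
      linarith
    apply Complex.ext <;> simp only [ψ, Complex.add_re, Complex.add_im, Complex.ofReal_re,
      Complex.ofReal_im, Complex.mul_re, Complex.mul_im, Complex.I_re, Complex.I_im, him, σ]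
    · ring
    · split_ifs with h
      · rw [abs_of_nonneg h]; ring
      · rw [abs_of_neg (not_le.1 h)]; ring
  have hmaps : ψ '' (s ∩ Icc (-1) 1) ⊆ {z : ℂ | ‖z‖ = 1 ∧ z.re ∈ s} := by
    rintro _ ⟨x, ⟨hxs, hx⟩, rfl⟩
    have hx2 : 0 ≤ 1 - x ^ 2 := by nlinarith [hx.1, hx.2]
    have hre : (ψ x).re = x := by simp [ψ]
    refine ⟨?_, by rwa [hre]⟩
    rw [← pow_eq_one_iff_of_nonneg (norm_nonneg _) two_ne_zero, Complex.sq_norm,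
      Complex.normSq_apply, hre]
    simp only [ψ, Complex.add_im, Complex.ofReal_im, Complex.mul_im, Complex.ofReal_re,
      Complex.I_re, Complex.I_im]
    nlinarith [Real.sq_sqrt hx2]
  rw [← hψω]
  exact closure_mono hmaps (mem_closure_image hψ.continuousAt hre)

/-- There is a dense subset of the unit circle each point of which is the root of a quartic
Alexander polynomial having precisely two roots on the unit circle. -/
theorem dense_roots_of_quartic_alexander_polynomials :
    ∀ ω : ℂ, ‖ω‖ = 1 →
      ω ∈ closure {β : ℂ | ‖β‖ = 1 ∧
        ∃ p : Polynomial ℤ, p.natDegree = 4 ∧ p.coeff 0 ≠ 0 ∧ p.reverse = p ∧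
          (p.eval 1 = 1 ∨ p.eval 1 = -1) ∧ Polynomial.aeval β p = 0 ∧
          {z : ℂ | ‖z‖ = 1 ∧ Polynomial.aeval z p = 0}.encard = 2} := by
  intro ω hω
  set s := {x : ℝ | ∃ n a : ℤ, 0 < n ∧ circleQuadratic n a x = 0}
  have hs : Icc (-1) 1 ⊆ closure (s ∩ Icc (-1 : ℝ) 1) := by
    refine Icc_subset_closure_inter_of_exists_mem_Icc (by norm_num) fun x y hxy hy => ?_
    obtain ⟨n, a, hn, z, hz, hq⟩ := exists_circleQuadratic_eq_zero hxy hy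
    exact ⟨z, ⟨n, a, hn, hq⟩, hz⟩
  have hre : ω.re ∈ Icc (-1) 1 := abs_le.1 ((Complex.abs_re_le_norm ω).trans hω.le)
  refine closure_mono ?_ (mem_closure_unitCircle_of_re_mem_closure hω (hs hre))
  rintro β ⟨hβ, n, a, hn, hq⟩
  have hroot := (aeval_alexanderQuartic_eq_zero_iff n a hβ).2 hq
  refine ⟨hβ, alexanderQuartic n a, alexanderQuartic_natDegree hn.ne' a, ?_,
    alexanderQuartic_reverse hn.ne' a, Or.inl (alexanderQuartic_eval_one n a), hroot,
    encard_unitCircle_roots_alexanderQuartic hn.le a hβ hroot⟩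
  rw [alexanderQuartic_coeff_zero]
  exact neg_ne_zero.2 hn.ne'
end

section
/- Let n be a natural number and V an n×n real matrix such that det(Vᵀ - V) ≠ 0. Let M be the n×n complex matrix M = i · ((Vᵀ - V) mapped entrywise into ℂ). Then M is Hermitian, M is invertible, n is even, and among the n real eigenvalues of M (counted with multiplicity), exactly n/2 are positive and exactly n/2 are negative; in particular the signature of M (number of positive eigenvalues minus number of negative eigenvalues) is zero. -/
/-!
`M = i (Vᵀ - V)` is `i` times a real skew-symmetric matrix, so `Mᵀ = -M`. As a matrix and its
transpose share their characteristic polynomial, `M` and `-M` have the same eigenvalues with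
multiplicity: the spectrum of the Hermitian matrix `M` is symmetric about `0`. Since `det M ≠ 0`,
no eigenvalue vanishes, so the positive and negative eigenvalues pair off and each make up half.
-/

open Matrix Polynomial

namespace Matrix

section SkewSymmetric

variable {n : Type*}

lemma isHermitian_I_smul_map_ofReal {A : Matrix n n ℝ} (hA : Aᵀ = -A) :
    (Complex.I • A.map Complex.ofReal).IsHermitian := by
  ext i j
  have hij : A j i = -A i j := congrFun (congrFun hA i) j
  simp [hij]

lemma transpose_I_smul_map_ofReal {A : Matrix n n ℝ} (hA : Aᵀ = -A) :
    (Complex.I • A.map Complex.ofReal)ᵀ = -(Complex.I • A.map Complex.ofReal) := by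
  rw [transpose_smul, ← transpose_map, hA, Matrix.map_neg _ Complex.ofReal_neg, smul_neg]

lemma isUnit_I_smul_map_ofReal [Fintype n] [DecidableEq n] {A : Matrix n n ℝ} (hA : A.det ≠ 0) :
    IsUnit (Complex.I • A.map Complex.ofReal) := by
  have hdet : (A.map Complex.ofReal).det = A.det := (RingHom.map_det Complex.ofRealHom A).symm
  rw [isUnit_iff_isUnit_det, det_smul, hdet]
  simp [hA]

end SkewSymmetric

namespace IsHermitian

variable {𝕜 n : Type*} [RCLike 𝕜] [Fintype n] [DecidableEq n] {A : Matrix n n 𝕜}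

lemma charpoly_neg_eq (hA : A.IsHermitian) :
    (-A).charpoly = ∏ i, (X - C (-(hA.eigenvalues i : 𝕜))) := by
  conv_lhs =>
    rw [hA.spectral_theorem, ← map_neg, Unitary.conjStarAlgAut_apply, charpoly_mul_comm,
      ← mul_assoc]
  simp [charpoly_diagonal]

lemma eigenvalues_map_neg_eq_of_charpoly_neg (hA : A.IsHermitian)
    (h : (-A).charpoly = A.charpoly) :
    Finset.univ.val.map (fun i => -hA.eigenvalues i) = Finset.univ.val.map hA.eigenvalues := by
  have hroots := congrArg (fun p : 𝕜[X] => p.roots.map RCLike.re) h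
  simp only [hA.roots_charpoly_eq_eigenvalues, hA.charpoly_neg_eq] at hroots
  rw [roots_prod _ _ (Finset.prod_ne_zero_iff.mpr fun i _ => X_sub_C_ne_zero _)] at hroots
  simpa [Multiset.map_map, Function.comp_def] using hroots

lemma eigenvalues_ne_zero_of_isUnit (hA : A.IsHermitian) (hunit : IsUnit A) (i : n) :
    hA.eigenvalues i ≠ 0 := by
  have hdet : A.det ≠ 0 := ((isUnit_iff_isUnit_det A).mp hunit).ne_zero
  rw [hA.det_eq_prod_eigenvalues, Finset.prod_ne_zero_iff] at hdet
  exact_mod_cast hdet i (Finset.mem_univ i)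

end IsHermitian

end Matrix

namespace Fintype

variable {ι : Type*} [Fintype ι] {f : ι → ℝ}

lemma card_pos_eq_card_neg_of_map_neg
    (hf : Finset.univ.val.map (fun i => -f i) = Finset.univ.val.map f) :
    card {i // 0 < f i} = card {i // f i < 0} := by
  have hcount := congrArg (Multiset.countP (0 < ·)) hf
  simp only [Multiset.countP_map, neg_pos] at hcount
  rw [card_subtype, card_subtype]
  exact hcount.symm

lemma card_pos_add_card_neg (hf : ∀ i, f i ≠ 0) :
    card {i // 0 < f i} + card {i // f i < 0} = card ι := by
  rw [← card_subtype_or_disjoint _ _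
    (fun p hpos hneg i hi => ((hpos i hi).asymm (hneg i hi)).elim)]
  exact card_congr (Equiv.subtypeUnivEquiv fun i => (hf i).lt_or_gt.symm)

end Fintype

/-- If `V` is a real square matrix with `det (Vᵀ - V) ≠ 0`, then the Hermitian matrix
`i (Vᵀ - V)` is invertible, has even size, and has signature zero: exactly half of its
eigenvalues are positive and half are negative. -/
theorem signature_zero_of_skew_part_nonsingular
    (n : ℕ) (V : Matrix (Fin n) (Fin n) ℝ) (h : (Vᵀ - V).det ≠ 0) :
    ∃ hM : (Complex.I • (Vᵀ - V).map Complex.ofReal).IsHermitian,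
      IsUnit (Complex.I • (Vᵀ - V).map Complex.ofReal) ∧ Even n ∧
      Fintype.card {i : Fin n // 0 < hM.eigenvalues i} = n / 2 ∧
      Fintype.card {i : Fin n // hM.eigenvalues i < 0} = n / 2 ∧
      (Fintype.card {i : Fin n // 0 < hM.eigenvalues i} : ℤ) -
        (Fintype.card {i : Fin n // hM.eigenvalues i < 0} : ℤ) = 0 := by
  have hskew : (Vᵀ - V)ᵀ = -(Vᵀ - V) := by rw [transpose_sub, transpose_transpose, neg_sub]
  have hM := isHermitian_I_smul_map_ofReal hskew
  have hunit := isUnit_I_smul_map_ofReal h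
  have hsymm := hM.eigenvalues_map_neg_eq_of_charpoly_neg <| by
    rw [← transpose_I_smul_map_ofReal hskew, charpoly_transpose]
  have hpair := Fintype.card_pos_eq_card_neg_of_map_neg hsymm
  have htotal := Fintype.card_pos_add_card_neg (hM.eigenvalues_ne_zero_of_isUnit hunit)
  rw [Fintype.card_fin] at htotal
  exact ⟨hM, hunit, ⟨_, by rw [← htotal, hpair]⟩, by omega, by omega, by omega⟩
end

section
/- Let n be a natural number and M an n×n integer matrix that is skew-symmetric (Mᵀ = -M) and unimodular (det M = 1). Then n is even, say n = 2g, and there exists an invertible integer matrix P (i.e., P with det P a unit of ℤ) such that P * M * Pᵀ, after reindexing by a bijection Fin n ≃ Fin g × Fin 2, equals the block-diagonal matrix with g identical 2×2 blocks, each block being the standard symplectic block with entries 0, 1 in the first row and -1, 0 in the second row. -/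
/-!
An alternating form `B` on a finite free module over a PID whose Gram matrix has unit
determinant has a symplectic basis. Take a basis vector `u`; unimodularity gives `v` with
`B u v = 1`, and `V` splits as `span {u, v}` plus the `B`-orthogonal complement `K` of that
plane. Since `R` is a PID, `K` is free, and in the adapted basis the Gram matrix of `B` is the
block sum of `!![0, 1; -1, 0]` and the Gram matrix of `B` on `K`, so the latter is again
unimodular and induction applies. For the matrix statement, take `B x y = x ⬝ᵥ M *ᵥ y` on
`ℤⁿ`; the rows of `P` are the symplectic basis vectors, and `n = 2 g` is just their count.
-/

open Matrix Module
open LinearMap (BilinForm)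
open LinearMap.BilinForm (toMatrix)

section Hyperbolic

variable {R V : Type*} [CommRing R] [AddCommGroup V] [Module R V] {B : BilinForm R V}

variable (B) in
def hyperbolicCompl (u v : V) : Submodule R V := LinearMap.ker (B u) ⊓ LinearMap.ker (B v)

theorem mem_hyperbolicCompl {u v x : V} :
    x ∈ hyperbolicCompl B u v ↔ B u x = 0 ∧ B v x = 0 := by
  simp [hyperbolicCompl]

variable (hB : B.IsAlt) {u v : V} (huv : B u v = 1)
include hB huv

theorem sub_smul_sub_smul_mem_hyperbolicCompl (x : V) :
    x - B x v • u - B u x • v ∈ hyperbolicCompl B u v := by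
  simp [mem_hyperbolicCompl, hB.self_eq_zero, huv, ← LinearMap.IsAlt.neg hB u v,
    ← LinearMap.IsAlt.neg hB v x]

def hyperbolicSplitting : V ≃ₗ[R] (Fin 2 → R) × hyperbolicCompl B u v where
  toFun x := (![B x v, B u x], ⟨_, sub_smul_sub_smul_mem_hyperbolicCompl hB huv x⟩)
  invFun p := p.1 0 • u + p.1 1 • v + p.2
  map_add' x y := by
    ext i
    · fin_cases i <;> simp
    · simp [add_smul]; abel
  map_smul' c x := by
    ext i
    · fin_cases i <;> simp
    · simp [smul_sub, mul_smul]
  left_inv x := by simp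
  right_inv := by
    rintro ⟨a, k, hk⟩
    obtain ⟨huk, hvk⟩ := mem_hyperbolicCompl.1 hk
    have hkv : B k v = 0 := by rw [← LinearMap.IsAlt.neg hB, hvk, neg_zero]
    ext i
    · fin_cases i <;> simp [hB.self_eq_zero, huv, huk, hkv]
    · simp [hB.self_eq_zero, huv, huk, hkv]; abel

variable {κ : Type*} (bK : Basis κ R (hyperbolicCompl B u v))

noncomputable def hyperbolicBasis : Basis (Fin 2 ⊕ κ) R V :=
  ((Pi.basisFun R (Fin 2)).prod bK).map (hyperbolicSplitting hB huv).symm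

@[simp]
theorem hyperbolicBasis_inl (s : Fin 2) : hyperbolicBasis hB huv bK (.inl s) = ![u, v] s := by
  fin_cases s <;> simp [hyperbolicBasis, hyperbolicSplitting]

@[simp]
theorem hyperbolicBasis_inr (i : κ) : hyperbolicBasis hB huv bK (.inr i) = bK i := by
  simp [hyperbolicBasis, hyperbolicSplitting]

theorem toMatrix_hyperbolicBasis [Fintype κ] [DecidableEq κ] :
    toMatrix (hyperbolicBasis hB huv bK) B =
      fromBlocks !![0, 1; -1, 0] 0 0 (toMatrix bK (B.restrict _)) := by
  have hvu : B v u = -1 := by rw [← LinearMap.IsAlt.neg hB, huv]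
  have hK (i : κ) := mem_hyperbolicCompl.1 (bK i).2
  have hKu (i : κ) : B (bK i) u = 0 := by rw [← LinearMap.IsAlt.neg hB, (hK i).1, neg_zero]
  have hKv (i : κ) : B (bK i) v = 0 := by rw [← LinearMap.IsAlt.neg hB, (hK i).2, neg_zero]
  ext (s | i) (t | j)
  · fin_cases s <;> fin_cases t <;> simp [hB.self_eq_zero, huv, hvu]
  · fin_cases s <;> simp [hK]
  · fin_cases t <;> simp [hKu, hKv]
  · simp

end Hyperbolic

section Unimodular

variable {R V : Type*} [CommRing R] [AddCommGroup V] [Module R V] {B : BilinForm R V}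
  {ι κ : Type*} [Fintype ι] [DecidableEq ι] [Fintype κ] [DecidableEq κ]

theorem exists_apply_eq_one_of_isUnit_det (c : Basis ι R V)
    (hc : IsUnit (toMatrix c B).det) (i : ι) : ∃ v, B (c i) v = 1 := by
  set G := toMatrix c B
  refine ⟨∑ j, G⁻¹ j i • c j, ?_⟩
  calc B (c i) (∑ j, G⁻¹ j i • c j) = (G * G⁻¹) i i := by
        simp [G, Matrix.mul_apply, mul_comm]
    _ = 1 := by rw [mul_nonsing_inv G hc, one_apply_eq]

theorem isUnit_det_toMatrix_of_basis [Nontrivial R] (b : Basis ι R V) (c : Basis κ R V)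
    (hb : IsUnit (toMatrix b B).det) : IsUnit (toMatrix c B).det := by
  let e := b.indexEquiv c
  have := b.invertibleToMatrix (c.reindex e.symm)
  have hc : toMatrix (c.reindex e.symm) B = (toMatrix c B).submatrix e e := by
    ext i j; simp
  rw [← det_submatrix_equiv_self e, ← hc, ← LinearMap.BilinForm.toMatrix_mul_basis_toMatrix b,
    det_mul, det_mul, det_transpose]
  exact ((isUnit_det_of_invertible _).mul hb).mul (isUnit_det_of_invertible _)

theorem isUnit_det_toMatrix_restrict_hyperbolicCompl [Nontrivial R] (hB : B.IsAlt) {u v : V}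
    (huv : B u v = 1) (c : Basis ι R V) (hc : IsUnit (toMatrix c B).det)
    (bK : Basis κ R (hyperbolicCompl B u v)) :
    IsUnit (toMatrix bK (B.restrict _)).det := by
  simpa [toMatrix_hyperbolicBasis, det_fin_two_of] using
    isUnit_det_toMatrix_of_basis c (hyperbolicBasis hB huv bK) hc

end Unimodular

section Symplectic

variable {R V : Type*} [CommRing R] [AddCommGroup V] [Module R V] {B : BilinForm R V}

variable (B) in
def IsSymplecticBasis {ι : Type*} [DecidableEq ι] (b : Basis (ι × Fin 2) R V) : Prop :=
  ∀ i j, B (b i) (b j) = if i.1 = j.1 then !![0, 1; -1, 0] i.2 j.2 else 0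

def finSuccProdEquiv (g : ℕ) : Fin (g + 1) × Fin 2 ≃ Fin 2 ⊕ Fin g × Fin 2 where
  toFun p := Fin.cases (.inl p.2) (fun a => .inr (a, p.2)) p.1
  invFun := Sum.elim (fun s => (0, s)) (fun p => (p.1.succ, p.2))
  left_inv := by rintro ⟨a, s⟩; cases a using Fin.cases <;> rfl
  right_inv := by rintro (s | ⟨a, s⟩) <;> rfl

theorem IsSymplecticBasis.hyperbolicBasis_reindex (hB : B.IsAlt) {u v : V} (huv : B u v = 1)
    {g : ℕ} {bK : Basis (Fin g × Fin 2) R (hyperbolicCompl B u v)}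
    (hbK : IsSymplecticBasis (B.restrict _) bK) :
    IsSymplecticBasis B ((hyperbolicBasis hB huv bK).reindex (finSuccProdEquiv g).symm) := by
  rintro ⟨a, s⟩ ⟨b, t⟩
  rw [Basis.reindex_apply, Basis.reindex_apply, Equiv.symm_symm,
    ← LinearMap.BilinForm.toMatrix_apply, toMatrix_hyperbolicBasis]
  cases a using Fin.cases <;> cases b using Fin.cases
  · simp [finSuccProdEquiv]
  · simp [finSuccProdEquiv, (Fin.succ_ne_zero _).symm]
  · simp [finSuccProdEquiv, Fin.succ_ne_zero]
  · simpa [finSuccProdEquiv] using hbK _ _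

theorem exists_isSymplecticBasis [IsDomain R] [IsPrincipalIdealRing R] (hB : B.IsAlt) {m : ℕ}
    (c : Basis (Fin m) R V) (hc : IsUnit (toMatrix c B).det) :
    ∃ g, ∃ b : Basis (Fin g × Fin 2) R V, IsSymplecticBasis B b := by
  induction m using Nat.strong_induction_on generalizing V with
  | _ m ih =>
    rcases m.eq_zero_or_pos with rfl | hm
    · exact ⟨0, c.reindex (Equiv.equivOfIsEmpty _ _), fun i => isEmptyElim i⟩
    obtain ⟨v, huv⟩ := exists_apply_eq_one_of_isUnit_det c hc ⟨0, hm⟩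
    obtain ⟨k, bK⟩ := Submodule.basisOfPid c (hyperbolicCompl B (c ⟨0, hm⟩) v)
    have hk : m = 2 + k := by
      simpa using Fintype.card_congr (c.indexEquiv (hyperbolicBasis hB huv bK))
    obtain ⟨g, bK', hbK'⟩ := ih k (by omega) (B := B.restrict _) (fun x => hB x) bK
      (isUnit_det_toMatrix_restrict_hyperbolicCompl hB huv c hc bK)
    exact ⟨g + 1, _, hbK'.hyperbolicBasis_reindex hB huv⟩

end Symplectic

theorem Matrix.isAlt_toBilin'_of_transpose_eq_neg {R ι : Type*} [CommRing R]
    [IsAddTorsionFree R] [Fintype ι] [DecidableEq ι] {M : Matrix ι ι R} (hM : Mᵀ = -M) :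
    (Matrix.toBilin' M).IsAlt := by
  intro x
  rw [toBilin'_apply', ← self_eq_neg]
  nth_rw 1 [← neg_neg M, ← hM]
  rw [neg_mulVec, dotProduct_neg, mulVec_transpose, dotProduct_comm, dotProduct_mulVec]

/-- A unimodular skew-symmetric integer matrix has even size and is congruent over `ℤ` to a
direct sum of standard symplectic blocks `!![0, 1; -1, 0]`. -/
theorem skew_symmetric_unimodular_congruent_symplectic
    (n : ℕ) (M : Matrix (Fin n) (Fin n) ℤ) (hskew : Mᵀ = -M) (hdet : M.det = 1) :
    ∃ g : ℕ, n = 2 * g ∧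
      ∃ P : Matrix (Fin n) (Fin n) ℤ, IsUnit P.det ∧
        ∃ e : Fin n ≃ Fin g × Fin 2,
          ∀ i j : Fin n, (P * M * Pᵀ) i j =
            if (e i).1 = (e j).1 then !![0, 1; -1, 0] (e i).2 (e j).2 else 0 := by
  let c := Pi.basisFun ℤ (Fin n)
  have hM : toMatrix c (toBilin' M) = M := by
    rw [LinearMap.BilinForm.toMatrix_basisFun, LinearMap.BilinForm.toMatrix'_toBilin']
  obtain ⟨g, b, hb⟩ := exists_isSymplecticBasis (isAlt_toBilin'_of_transpose_eq_neg hskew) c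
    (by rw [hM, hdet]; exact isUnit_one)
  let e := c.indexEquiv b
  let P := c.toMatrix (b.reindex e.symm)
  have := c.invertibleToMatrix (b.reindex e.symm)
  refine ⟨g, by simpa [mul_comm] using Fintype.card_congr e, Pᵀ,
    by simpa using isUnit_det_of_invertible P, e, fun i j => ?_⟩
  rw [transpose_transpose, ← hM, LinearMap.BilinForm.toMatrix_mul_basis_toMatrix,
    LinearMap.BilinForm.toMatrix_apply]
  simpa using hb (e i) (e j)
end

section
/- Let n be a natural number and V an n×n real matrix with det(V - Vᵀ) ≠ 0. Then the set {ω ∈ ℂ : |ω| = 1, ω ≠ 1, and det((1-ω) · V_ℂ + (1-ω⁻¹) · (Vᵀ)_ℂ) = 0} is finite, where V_ℂ denotes the entrywise inclusion of V into ℂ. -/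
open Matrix Polynomial

/-! `W(ω) = (1 - ω) • (V - ω⁻¹ • Vᵀ)` for `ω ≠ 0`, so `W(ω)` is singular for `ω ≠ 1` exactly when
`ω⁻¹` is a root of the Alexander polynomial `det (V - t • Vᵀ)`. That polynomial does not vanish at
`t = 1`, because `det (V - Vᵀ) ≠ 0`, so it has only finitely many roots. -/

namespace Matrix

variable {ι R : Type*} [Fintype ι] [DecidableEq ι] [CommRing R]

theorem eval_det_map_C_add_X_smul (A B : Matrix ι ι R) (t : R) :
    (det (A.map C + (X : R[X]) • B.map C)).eval t = det (A + t • B) := by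
  rw [← coe_evalRingHom, RingHom.map_det]
  congr 1
  ext i j
  simp [mul_comm t]

theorem finite_setOf_det_add_smul_eq_zero [IsDomain R] {A B : Matrix ι ι R} {t₀ : R}
    (h : det (A + t₀ • B) ≠ 0) : {t : R | det (A + t • B) = 0}.Finite := by
  have hp : det (A.map C + (X : R[X]) • B.map C) ≠ 0 := fun hp ↦
    h <| by rw [← eval_det_map_C_add_X_smul, hp, eval_zero]
  simpa only [IsRoot, eval_det_map_C_add_X_smul] using finite_setOfPred_isRoot hp

end Matrix

/-- For a real square matrix `V` with `det (V - Vᵀ) ≠ 0`, the matrix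
`W(ω) = (1-ω) V + (1-ω⁻¹) Vᵀ` is singular for only finitely many `ω ≠ 1` on the unit circle. -/
theorem finite_singular_set_on_circle
    (n : ℕ) (V : Matrix (Fin n) (Fin n) ℝ) (h : (V - Vᵀ).det ≠ 0) :
    {ω : ℂ | ‖ω‖ = 1 ∧ ω ≠ 1 ∧
      ((1 - ω) • V.map Complex.ofReal + (1 - ω⁻¹) • (Vᵀ).map Complex.ofReal).det = 0}.Finite := by
  set A := V.map Complex.ofReal
  set B := (Vᵀ).map Complex.ofReal
  have hA_sub_B : det (A + (1 : ℂ) • -B) ≠ 0 := by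
    rw [one_smul, ← sub_eq_add_neg, ← Matrix.map_sub _ Complex.ofReal_sub]
    exact (Complex.ofRealHom.map_det _).symm.trans_ne (Complex.ofReal_ne_zero.mpr h)
  refine ((finite_setOf_det_add_smul_eq_zero hA_sub_B).preimage inv_injective.injOn).subset ?_
  rintro ω ⟨hω_norm, hω_one, hdet⟩
  have hω : ω ≠ 0 := by rintro rfl; simp at hω_norm
  have hW : (1 - ω) • A + (1 - ω⁻¹) • B = (1 - ω) • (A + ω⁻¹ • -B) := by
    rw [smul_add, smul_smul, smul_neg, ← neg_smul]
    congr 2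
    field_simp
    ring
  rw [hW, det_smul] at hdet
  exact (mul_eq_zero.mp hdet).resolve_left (pow_ne_zero _ (sub_ne_zero.mpr hω_one.symm))
end

section
/- Let σ : ℝ → ℤ be a function and F ⊆ ℝ a finite set with 0 ∉ F. Assume: (i) σ is locally constant on ℝ \ F, i.e., for every x ∉ F there exists ε > 0 such that σ is constant on the open interval (x-ε, x+ε); (ii) σ(0) = 0; (iii) σ is balanced at each discontinuity: for every x ∈ F there exist ε > 0 and integers l, r such that σ equals l on (x-ε, x), σ equals r on (x, x+ε), and 2·σ(x) = l + r. Then: (a) for every x ∉ F, σ(x) is even; and (b) for every x ∈ F, with l and r as in (iii), the integers l and r have the same parity, r - l is even, and σ(x) ≡ (r - l)/2 (mod 2). -/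
/-!
Reduce `σ` mod 2. At a point off `F` the reduction is constant nearby, and at a point of `F` the
balance condition `2 σ(x) = l + r` forces `l ≡ r (mod 2)`; so around every point the reduction
is constant on a punctured neighbourhood. The value of that constant is a locally constant
function on the connected line, hence equal to its value `σ(0) = 0` at `0`. This gives (a), shows
that `l` and `r` are even, and (b) follows from `2 σ(x) = l + r`.
-/

open Filter Topology Set

theorem Filter.Eventually.eq_of_eventually_eq {α β : Type*} {l : Filter β} [l.NeBot]
    {f : β → α} {a b : α} (ha : ∀ᶠ y in l, f y = a) (hb : ∀ᶠ y in l, f y = b) : a = b :=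
  let ⟨_, hya, hyb⟩ := (ha.and hb).exists
  hya.symm.trans hyb

theorem Int.even_of_eventually_eq {β : Type*} {l : Filter β} [l.NeBot] {f : β → ℤ} {n : ℤ}
    (hn : ∀ᶠ y in l, f y = n) (hf : ∀ᶠ y in l, (f y : ZMod 2) = 0) : Even n :=
  ZMod.intCast_eq_zero_iff_even.1 ((hn.mono fun _ hy => by rw [hy]).eq_of_eventually_eq hf)

theorem eventually_nhdsNE_eq_of_forall_exists_eventually_nhdsNE_eq {X α : Type*}
    [TopologicalSpace X] [T1Space X] [PreconnectedSpace X] [∀ x : X, (𝓝[≠] x).NeBot]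
    {f : X → α} (hf : ∀ x, ∃ c, ∀ᶠ y in 𝓝[≠] x, f y = c) {x₀ : X} {c : α}
    (hx₀ : ∀ᶠ y in 𝓝[≠] x₀, f y = c) (x : X) : ∀ᶠ y in 𝓝[≠] x, f y = c := by
  choose L hL using hf
  have hLconst : IsLocallyConstant L := by
    refine (IsLocallyConstant.iff_eventually_eq L).2 fun x => ?_
    have hnear : ∀ᶠ z in 𝓝 x, ∀ᶠ y in 𝓝 z, y ≠ x → f y = L x :=
      (eventually_nhdsWithin_iff.1 (hL x)).eventually_nhds
    filter_upwards [hnear] with z hz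
    rcases eq_or_ne z x with rfl | hzx
    · rfl
    · refine (hL z).eq_of_eventually_eq ?_
      filter_upwards [nhdsWithin_le_nhds (hz.and (eventually_ne_nhds hzx))] with y hy
      exact hy.1 hy.2
  rw [hx₀.eq_of_eventually_eq (hL x₀), hLconst.apply_eq_of_preconnectedSpace x₀ x]
  exact hL x

section RealIntervals

variable {α : Type*} {f : ℝ → α} {x ε : ℝ} {c : α}

theorem eventually_nhds_eq_of_forall_Ioo (hε : 0 < ε)
    (h : ∀ y : ℝ, x - ε < y → y < x + ε → f y = c) : ∀ᶠ y in 𝓝 x, f y = c :=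
  mem_of_superset (Ioo_mem_nhds (by linarith) (by linarith)) fun y hy => h y hy.1 hy.2

theorem eventually_nhdsLT_eq_of_forall_Ioo (hε : 0 < ε)
    (h : ∀ y : ℝ, x - ε < y → y < x → f y = c) : ∀ᶠ y in 𝓝[<] x, f y = c :=
  mem_of_superset (Ioo_mem_nhdsLT (by linarith)) fun y hy => h y hy.1 hy.2

theorem eventually_nhdsGT_eq_of_forall_Ioo (hε : 0 < ε)
    (h : ∀ y : ℝ, x < y → y < x + ε → f y = c) : ∀ᶠ y in 𝓝[>] x, f y = c :=
  mem_of_superset (Ioo_mem_nhdsGT (by linarith)) fun y hy => h y hy.1 hy.2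

end RealIntervals

section BalancedStepFunction

variable {σ : ℝ → ℤ} {F : Set ℝ}

theorem exists_eventually_nhdsNE_intCast_eq_of_balanced
    (hloc : ∀ x : ℝ, x ∉ F → ∃ ε > (0 : ℝ), ∀ y : ℝ, x - ε < y → y < x + ε → σ y = σ x)
    (hbal : ∀ x ∈ F, ∃ ε > (0 : ℝ), ∃ l r : ℤ,
      (∀ y : ℝ, x - ε < y → y < x → σ y = l) ∧
      (∀ y : ℝ, x < y → y < x + ε → σ y = r) ∧
      2 * σ x = l + r)
    (x : ℝ) : ∃ c : ZMod 2, ∀ᶠ y in 𝓝[≠] x, (σ y : ZMod 2) = c := by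
  by_cases hx : x ∈ F
  · obtain ⟨ε, hε, l, r, hl, hr, hlr⟩ := hbal x hx
    have hlr₂ : (l : ZMod 2) = r :=
      (ZMod.intCast_eq_intCast_iff_dvd_sub _ _ _).2 ⟨r - σ x, by omega⟩
    refine ⟨l, ?_⟩
    rw [← nhdsLT_sup_nhdsGT, eventually_sup]
    exact ⟨(eventually_nhdsLT_eq_of_forall_Ioo hε hl).mono fun _ hy => by rw [hy],
      (eventually_nhdsGT_eq_of_forall_Ioo hε hr).mono fun _ hy => by rw [hy, hlr₂]⟩
  · obtain ⟨ε, hε, h⟩ := hloc x hx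
    exact ⟨σ x, nhdsWithin_le_nhds <|
      (eventually_nhds_eq_of_forall_Ioo hε h).mono fun _ hy => by rw [hy]⟩

theorem eventually_nhdsNE_intCast_eq_zero_of_balanced (h0F : (0 : ℝ) ∉ F)
    (hloc : ∀ x : ℝ, x ∉ F → ∃ ε > (0 : ℝ), ∀ y : ℝ, x - ε < y → y < x + ε → σ y = σ x)
    (h0 : σ 0 = 0)
    (hbal : ∀ x ∈ F, ∃ ε > (0 : ℝ), ∃ l r : ℤ,
      (∀ y : ℝ, x - ε < y → y < x → σ y = l) ∧
      (∀ y : ℝ, x < y → y < x + ε → σ y = r) ∧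
      2 * σ x = l + r)
    (x : ℝ) : ∀ᶠ y in 𝓝[≠] x, (σ y : ZMod 2) = 0 := by
  obtain ⟨ε, hε, h⟩ := hloc 0 h0F
  refine eventually_nhdsNE_eq_of_forall_exists_eventually_nhdsNE_eq (x₀ := 0)
    (exists_eventually_nhdsNE_intCast_eq_of_balanced hloc hbal) (nhdsWithin_le_nhds ?_) x
  exact (eventually_nhds_eq_of_forall_Ioo hε h).mono fun _ hy => by rw [hy, h0, Int.cast_zero]

end BalancedStepFunction

theorem balanced_step_function_parity_general
    (σ : ℝ → ℤ) (F : Set ℝ) (h0F : (0 : ℝ) ∉ F)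
    (hloc : ∀ x : ℝ, x ∉ F → ∃ ε > (0 : ℝ), ∀ y : ℝ, x - ε < y → y < x + ε → σ y = σ x)
    (h0 : σ 0 = 0)
    (hbal : ∀ x ∈ F, ∃ ε > (0 : ℝ), ∃ l r : ℤ,
      (∀ y : ℝ, x - ε < y → y < x → σ y = l) ∧
      (∀ y : ℝ, x < y → y < x + ε → σ y = r) ∧
      2 * σ x = l + r) :
    (∀ x : ℝ, x ∉ F → Even (σ x)) ∧
    (∀ x ∈ F, ∀ ε > (0 : ℝ), ∀ l r : ℤ,
      (∀ y : ℝ, x - ε < y → y < x → σ y = l) →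
      (∀ y : ℝ, x < y → y < x + ε → σ y = r) →
      l % 2 = r % 2 ∧ Even (r - l) ∧ σ x ≡ (r - l) / 2 [ZMOD 2]) := by
  have hzero := eventually_nhdsNE_intCast_eq_zero_of_balanced h0F hloc h0 hbal
  refine ⟨fun x hx => ?_, fun x hx ε hε l r hl hr => ?_⟩
  · obtain ⟨ε, hε, h⟩ := hloc x hx
    exact Int.even_of_eventually_eq
      (nhdsWithin_le_nhds (eventually_nhds_eq_of_forall_Ioo hε h)) (hzero x)
  have hlσ := eventually_nhdsLT_eq_of_forall_Ioo hε hl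
  have hrσ := eventually_nhdsGT_eq_of_forall_Ioo hε hr
  obtain ⟨a, rfl⟩ := Int.even_of_eventually_eq hlσ (nhdsWithin_mono _ (fun _ => ne_of_lt) (hzero x))
  obtain ⟨b, rfl⟩ := Int.even_of_eventually_eq hrσ (nhdsWithin_mono _ (fun _ => ne_of_gt) (hzero x))
  obtain ⟨ε', hε', l', r', hl', hr', hlr⟩ := hbal x hx
  obtain rfl : a + a = l' := hlσ.eq_of_eventually_eq (eventually_nhdsLT_eq_of_forall_Ioo hε' hl')
  obtain rfl : b + b = r' := hrσ.eq_of_eventually_eq (eventually_nhdsGT_eq_of_forall_Ioo hε' hr')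
  refine ⟨by omega, ⟨b - a, by omega⟩, ?_⟩
  unfold Int.ModEq
  omega

/-- A balanced integer-valued step function vanishing at `0` is even-valued away from its
discontinuities, and at each discontinuity the one-sided limits have equal parity and the
value is congruent mod 2 to the jump `(r - l)/2`. -/
theorem balanced_step_function_parity
    (σ : ℝ → ℤ) (F : Set ℝ) (hF : F.Finite) (h0F : (0 : ℝ) ∉ F)
    (hloc : ∀ x : ℝ, x ∉ F → ∃ ε > (0 : ℝ), ∀ y : ℝ, x - ε < y → y < x + ε → σ y = σ x)
    (h0 : σ 0 = 0)
    (hbal : ∀ x ∈ F, ∃ ε > (0 : ℝ), ∃ l r : ℤ,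
      (∀ y : ℝ, x - ε < y → y < x → σ y = l) ∧
      (∀ y : ℝ, x < y → y < x + ε → σ y = r) ∧
      2 * σ x = l + r) :
    (∀ x : ℝ, x ∉ F → Even (σ x)) ∧
    (∀ x ∈ F, ∀ ε > (0 : ℝ), ∀ l r : ℤ,
      (∀ y : ℝ, x - ε < y → y < x → σ y = l) →
      (∀ y : ℝ, x < y → y < x + ε → σ y = r) →
      l % 2 = r % 2 ∧ Even (r - l) ∧ σ x ≡ (r - l) / 2 [ZMOD 2]) :=
  balanced_step_function_parity_general σ F h0F hloc h0 hbal
end
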